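/- arXiv:2503.12951 — 3 statements merged into one kernel-verified Lean document; each statement's English description precedes it below -/
import Mathlib

section
/- Let T > 0 and let g : [0,T] → ℝ be a C¹ function with g(t) ≥ 0 for all t ∈ [0,T]. Suppose there exist positive numbers α, A, B such that g'(t) + A·g(t)^(1+α) ≤ B·g(t) for each t ∈ [0,T]. Then g(t) ≤ (1/(α·A·t))^(1/α) · e^(B·t) for each t ∈ (0,T]. -/
/-!
The damped function `h t = e^{-Bt} g t` satisfies `h' ≤ -A e^{αBt} h^{1+α} ≤ -A h^{1+α}`.
So `h` is nonincreasing, and while `h > 0` the function `h^{-α}` grows at rate at least `αA`;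
hence `h t ^ (-α) ≥ αAt`, i.e. `h t ≤ (αAt)^{-1/α}`, and multiplying back by `e^{Bt}` gives
the bound.
-/

open Real Set

lemma mul_sub_le_sub_of_hasDerivAt_Icc {f f' : ℝ → ℝ} {a b C : ℝ} (hab : a ≤ b)
    (hf : ∀ x ∈ Icc a b, HasDerivAt f (f' x) x) (hC : ∀ x ∈ Ioo a b, C ≤ f' x) :
    C * (b - a) ≤ f b - f a := by
  refine (convex_Icc a b).mul_sub_le_image_sub_of_le_deriv
    (fun x hx => (hf x hx).continuousAt.continuousWithinAt) ?_ ?_ a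
    (left_mem_Icc.2 hab) b (right_mem_Icc.2 hab) hab
  · rw [interior_Icc]
    exact fun x hx => (hf x (Ioo_subset_Icc_self hx)).differentiableAt.differentiableWithinAt
  · rw [interior_Icc]
    exact fun x hx => (hf x (Ioo_subset_Icc_self hx)).deriv ▸ hC x hx

lemma antitoneOn_Icc_of_hasDerivAt_nonpos {f f' : ℝ → ℝ} {a b : ℝ}
    (hf : ∀ x ∈ Icc a b, HasDerivAt f (f' x) x) (hf' : ∀ x ∈ Ioo a b, f' x ≤ 0) :
    AntitoneOn f (Icc a b) := by
  refine antitoneOn_of_deriv_nonpos (convex_Icc a b)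
    (fun x hx => (hf x hx).continuousAt.continuousWithinAt) ?_ ?_
  · rw [interior_Icc]
    exact fun x hx => (hf x (Ioo_subset_Icc_self hx)).differentiableAt.differentiableWithinAt
  · rw [interior_Icc]
    exact fun x hx => (hf x (Ioo_subset_Icc_self hx)).deriv ▸ hf' x hx

lemma le_one_div_rpow_one_div_of_le_rpow_neg {x c α : ℝ} (hx : 0 < x) (hc : 0 < c) (hα : 0 < α)
    (h : c ≤ x ^ (-α)) : x ≤ (1 / c) ^ (1 / α) := by
  rw [one_div, one_div, inv_rpow hc.le, ← rpow_neg hc.le, ← inv_neg]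
  exact (le_rpow_inv_iff_of_neg hx hc (neg_neg_of_pos hα)).2 h

/-- Comparison for the Bernoulli inequality `h' ≤ -A h^{1+α}`: whatever `h a` is, `h b` is
bounded by the solution that blows up at `a`. -/
theorem le_of_hasDerivAt_le_neg_mul_rpow {h h' : ℝ → ℝ} {a b α A : ℝ} (hab : a < b)
    (hα : 0 < α) (hA : 0 < A) (hderiv : ∀ u ∈ Icc a b, HasDerivAt h (h' u) u)
    (hnonneg : ∀ u ∈ Icc a b, 0 ≤ h u) (hle : ∀ u ∈ Icc a b, h' u ≤ -A * h u ^ (1 + α)) :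
    h b ≤ (1 / (α * A * (b - a))) ^ (1 / α) := by
  have hb : b ∈ Icc a b := right_mem_Icc.2 hab.le
  rcases (hnonneg b hb).eq_or_lt with hzero | hbpos
  · rw [← hzero]
    positivity
  have hanti : AntitoneOn h (Icc a b) := antitoneOn_Icc_of_hasDerivAt_nonpos hderiv fun u hu =>
    (hle u (Ioo_subset_Icc_self hu)).trans <|
      mul_nonpos_of_nonpos_of_nonneg (neg_nonpos.2 hA.le)
        (rpow_nonneg (hnonneg u (Ioo_subset_Icc_self hu)) _)
  have hpos : ∀ u ∈ Icc a b, 0 < h u := fun u hu => hbpos.trans_le (hanti hu hb hu.2)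
  have hderiv_rpow : ∀ u ∈ Icc a b,
      HasDerivAt (fun u => h u ^ (-α)) (h' u * (-α) * h u ^ (-α - 1)) u := fun u hu =>
    (hderiv u hu).rpow_const (Or.inl (hpos u hu).ne')
  have hrate : ∀ u ∈ Ioo a b, α * A ≤ h' u * (-α) * h u ^ (-α - 1) := by
    intro u hu
    have hu' := Ioo_subset_Icc_self hu
    have hcancel : h u ^ (1 + α) * h u ^ (-α - 1) = 1 := by
      rw [← rpow_add (hpos u hu'), show 1 + α + (-α - 1) = 0 by ring, rpow_zero]
    calc α * A = -A * h u ^ (1 + α) * (-α * h u ^ (-α - 1)) := by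
          linear_combination (-(α * A)) * hcancel
      _ ≤ h' u * (-α * h u ^ (-α - 1)) :=
          mul_le_mul_of_nonpos_right (hle u hu')
            (mul_nonpos_of_nonpos_of_nonneg (neg_nonpos.2 hα.le) (rpow_nonneg (hpos u hu').le _))
      _ = h' u * (-α) * h u ^ (-α - 1) := by ring
  have hgrowth := mul_sub_le_sub_of_hasDerivAt_Icc hab.le hderiv_rpow hrate
  have ha_pos : 0 < h a ^ (-α) := rpow_pos_of_pos (hpos a (left_mem_Icc.2 hab.le)) _
  exact le_one_div_rpow_one_div_of_le_rpow_neg hbpos (by have := sub_pos.2 hab; positivity) hα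
    (by linarith)

lemma mul_rpow_one_add_le {c x α : ℝ} (hc₀ : 0 ≤ c) (hc₁ : c ≤ 1) (hx : 0 ≤ x) (hα : 0 ≤ α) :
    (c * x) ^ (1 + α) ≤ c * x ^ (1 + α) := by
  rw [mul_rpow hc₀ hx]
  exact mul_le_mul_of_nonneg_right (rpow_le_self_of_le_one hc₀ hc₁ (by linarith))
    (rpow_nonneg hx _)

lemma exp_neg_mul_mul_sub_le {x x' u α A B : ℝ} (hu : 0 ≤ u) (hx : 0 ≤ x) (hα : 0 ≤ α)
    (hA : 0 ≤ A) (hB : 0 ≤ B) (h : x' + A * x ^ (1 + α) ≤ B * x) :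
    exp (-B * u) * (x' - B * x) ≤ -A * (exp (-B * u) * x) ^ (1 + α) := by
  have hexp_le_one : exp (-B * u) ≤ 1 := exp_le_one_iff.2 (by have := mul_nonneg hB hu; linarith)
  calc exp (-B * u) * (x' - B * x) ≤ exp (-B * u) * (-A * x ^ (1 + α)) :=
        mul_le_mul_of_nonneg_left (by linarith) (exp_pos _).le
    _ = -A * (exp (-B * u) * x ^ (1 + α)) := by ring
    _ ≤ -A * (exp (-B * u) * x) ^ (1 + α) :=
        mul_le_mul_of_nonpos_left (mul_rpow_one_add_le (exp_pos _).le hexp_le_one hx hα)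
          (neg_nonpos.2 hA)

theorem stmt_0_general (T : ℝ) (g g' : ℝ → ℝ)
    (hderiv : ∀ t ∈ Icc (0:ℝ) T, HasDerivAt g (g' t) t)
    (hpos : ∀ t ∈ Icc (0:ℝ) T, 0 ≤ g t)
    (α A B : ℝ) (hα : 0 < α) (hA : 0 < A) (hB : 0 < B)
    (hineq : ∀ t ∈ Icc (0:ℝ) T, g' t + A * (g t) ^ (1 + α) ≤ B * g t) :
    ∀ t ∈ Ioc (0:ℝ) T, g t ≤ (1 / (α * A * t)) ^ (1 / α) * Real.exp (B * t) := by
  intro t ht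
  have hsub : Icc 0 t ⊆ Icc 0 T := Icc_subset_Icc_right ht.2
  have hdamped : ∀ u ∈ Icc (0:ℝ) t, HasDerivAt (fun u => exp (-B * u) * g u)
      (exp (-B * u) * (g' u - B * g u)) u := by
    intro u hu
    exact (((hasDerivAt_const_mul (-B)).exp).mul (hderiv u (hsub hu))).congr_deriv (by ring)
  have hbound := le_of_hasDerivAt_le_neg_mul_rpow ht.1 hα hA hdamped
    (fun u hu => mul_nonneg (exp_pos _).le (hpos u (hsub hu))) fun u hu =>
      exp_neg_mul_mul_sub_le hu.1 (hpos u (hsub hu)) hα.le hA.le hB.le (hineq u (hsub hu))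
  rw [sub_zero] at hbound
  calc g t = exp (-B * t) * g t * exp (B * t) := by
        rw [mul_right_comm, ← exp_add]; simp
    _ ≤ _ := mul_le_mul_of_nonneg_right hbound (exp_pos _).le

theorem stmt_0 (T : ℝ) (hT : 0 < T) (g g' : ℝ → ℝ)
    (hderiv : ∀ t ∈ Icc (0:ℝ) T, HasDerivAt g (g' t) t)
    (hcont : ContinuousOn g' (Icc 0 T))
    (hpos : ∀ t ∈ Icc (0:ℝ) T, 0 ≤ g t)
    (α A B : ℝ) (hα : 0 < α) (hA : 0 < A) (hB : 0 < B)
    (hineq : ∀ t ∈ Icc (0:ℝ) T, g' t + A * (g t) ^ (1 + α) ≤ B * g t) :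
    ∀ t ∈ Ioc (0:ℝ) T, g t ≤ (1 / (α * A * t)) ^ (1 / α) * Real.exp (B * t) :=
  stmt_0_general T g g' hderiv hpos α A B hα hA hB hineq
end

section
/- Let h > 0, 0 < S < T, and let g, N ∈ C¹[S,T] be positive functions satisfying |g'(t)/2 + N(t)·g(t)| ≤ C̃·g(t) and N'(t) ≤ N(t)/(T−t+h) + C̄ on [S,T], where C̃, C̄ > 0. Then for S ≤ t₁ < t₂ < t₃ ≤ T, one has g(t₂)^{1+D} ≤ g(t₃)·g(t₁)^D·e^{𝒦}, where D = (∫_{t₂}^{t₃} dt/(T−t+h)) / (∫_{t₁}^{t₂} dt/(T−t+h)) and 𝒦 = 2D(t₂−t₁)[C̃ + C̄(t₂−t₁)] + 2(t₃−t₂)[C̃ + C̄∫_{t₂}^{t₃} (T−t₂+h)/(T−t+h) dt]. -/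
open Real Set MeasureTheory intervalIntegral

/-!
With `w t = T - t + h`, the bound on `g` says `(log g)' = -2 N + O(C̃)`, and the bound on `N'`
says `(N w)' ≤ C̄ w`, so `N w` is almost nonincreasing. Hence the integral of `N` is, up to errors,
at least `N(t₂) w(t₂) ∫ w⁻¹` on `[t₁, t₂]` and at most `N(t₂) w(t₂) ∫ w⁻¹` on `[t₂, t₃]`.
Integrating `(log g)'` over both intervals and weighting the first by `D` makes the two
`N(t₂) w(t₂)` terms cancel, which leaves `(1 + D) log g(t₂) ≤ log g(t₃) + D log g(t₁) + 𝒦`.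
-/

theorem abs_log_sub_log_add_two_integral_le {g g' N : ℝ → ℝ} {C a b : ℝ} (hab : a ≤ b)
    (hderiv : ∀ t ∈ Icc a b, HasDerivAt g (g' t) t) (hpos : ∀ t ∈ Icc a b, 0 < g t)
    (hN : IntervalIntegrable N volume a b)
    (hg : ∀ t ∈ Icc a b, |g' t / 2 + N t * g t| ≤ C * g t) :
    |log (g b) - log (g a) + 2 * ∫ t in a..b, N t| ≤ 2 * C * (b - a) := by
  have hlog : ∀ t ∈ Icc a b, HasDerivAt (fun s => log (g s)) (g' t / g t) t :=
    fun t ht => (hderiv t ht).log (hpos t ht).ne'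
  have hcont : ContinuousOn (fun s => log (g s)) (Icc a b) :=
    fun t ht => (hlog t ht).continuousAt.continuousWithinAt
  have hderivWithin :
      ∀ t ∈ Ioo a b, HasDerivWithinAt (fun s => log (g s)) (g' t / g t) (Ioi t) t :=
    fun t ht => (hlog t (Ioo_subset_Icc_self ht)).hasDerivWithinAt
  have hNOn : IntegrableOn N (Icc a b) := (intervalIntegrable_iff_integrableOn_Icc_of_le hab).mp hN
  have hlogDeriv : ∀ t ∈ Ioo a b, |g' t / g t + 2 * N t| ≤ 2 * C := by
    intro t ht
    have hgt := hpos t (Ioo_subset_Icc_self ht)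
    have : g' t / g t + 2 * N t = 2 * ((g' t / 2 + N t * g t) / g t) := by field_simp
    rw [this, abs_mul, abs_div, abs_of_pos hgt, abs_two]
    gcongr
    rw [div_le_iff₀ hgt]
    exact hg t (Ioo_subset_Icc_self ht)
  have hint : ∀ c : ℝ, ∫ t in a..b, (c - 2 * N t) = c * (b - a) - 2 * ∫ t in a..b, N t := by
    intro c
    rw [intervalIntegral.integral_sub intervalIntegrable_const (hN.const_mul 2),
      intervalIntegral.integral_const_mul, intervalIntegral.integral_const, smul_eq_mul, mul_comm]
  have hupper := sub_le_integral_of_hasDeriv_right_of_le (φ := fun t => 2 * C - 2 * N t) hab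
    hcont hderivWithin (continuousOn_const.integrableOn_Icc.sub (hNOn.const_mul 2))
    (fun t ht => by linarith [(abs_le.mp (hlogDeriv t ht)).2])
  have hlower := integral_le_sub_of_hasDeriv_right_of_le (φ := fun t => -(2 * C) - 2 * N t) hab
    hcont hderivWithin (continuousOn_const.integrableOn_Icc.sub (hNOn.const_mul 2))
    (fun t ht => by linarith [(abs_le.mp (hlogDeriv t ht)).1])
  rw [hint] at hupper hlower
  rw [abs_le]
  constructor <;> linarith

section Weight

variable {N : ℝ → ℝ} {T h C a b : ℝ}

theorem intervalIntegrable_of_hasDerivAt {N' : ℝ → ℝ} (hab : a ≤ b)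
    (hderiv : ∀ t ∈ Icc a b, HasDerivAt N (N' t) t) : IntervalIntegrable N volume a b := by
  apply ContinuousOn.intervalIntegrable
  rw [uIcc_of_le hab]
  exact fun t ht => (hderiv t ht).continuousAt.continuousWithinAt

theorem intervalIntegrable_inv_weight (hab : a ≤ b) (hw : ∀ t ∈ Icc a b, 0 < T - t + h) :
    IntervalIntegrable (fun t => (T - t + h)⁻¹) volume a b := by
  apply ContinuousOn.intervalIntegrable
  rw [uIcc_of_le hab]
  exact ContinuousOn.inv₀ (by fun_prop) fun t ht => (hw t ht).ne'

theorem mul_weight_le_of_deriv_le {N' : ℝ → ℝ} (hab : a ≤ b) (hC : 0 ≤ C)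
    (hw : ∀ t ∈ Icc a b, 0 < T - t + h) (hderiv : ∀ t ∈ Icc a b, HasDerivAt N (N' t) t)
    (hN : ∀ t ∈ Icc a b, N' t ≤ N t / (T - t + h) + C) :
    N b * (T - b + h) ≤ N a * (T - a + h) + C * (b - a) * (T - a + h) := by
  have hφ : ∀ t ∈ Icc a b,
      HasDerivAt (fun s => N s * (T - s + h)) (N' t * (T - t + h) - N t) t := by
    intro t ht
    have hw' : HasDerivAt (fun s => T - s + h) (-1) t := by
      simpa using ((hasDerivAt_id' t).const_sub T).add_const h
    exact ((hderiv t ht).mul hw').congr_deriv (by ring)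
  have hbound : ∀ t ∈ Ioo a b, N' t * (T - t + h) - N t ≤ C * (T - a + h) := by
    intro t ht
    have hwt := hw t (Ioo_subset_Icc_self ht)
    have := mul_le_mul_of_nonneg_right (hN t (Ioo_subset_Icc_self ht)) hwt.le
    rw [add_mul, div_mul_cancel₀ _ hwt.ne'] at this
    linarith [mul_nonneg hC (sub_nonneg.2 ht.1.le)]
  have := sub_le_integral_of_hasDeriv_right_of_le (φ := fun _ => C * (T - a + h)) hab
    (fun t ht => (hφ t ht).continuousAt.continuousWithinAt)
    (fun t ht => (hφ t (Ioo_subset_Icc_self ht)).hasDerivWithinAt)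
    continuousOn_const.integrableOn_Icc hbound
  rw [intervalIntegral.integral_const, smul_eq_mul] at this
  linarith

theorem integral_le_of_deriv_le_div_weight_add {N' : ℝ → ℝ} (hab : a ≤ b) (hC : 0 ≤ C)
    (hw : ∀ t ∈ Icc a b, 0 < T - t + h) (hderiv : ∀ t ∈ Icc a b, HasDerivAt N (N' t) t)
    (hN : ∀ t ∈ Icc a b, N' t ≤ N t / (T - t + h) + C) :
    ∫ t in a..b, N t ≤ N a * (T - a + h) * (∫ t in a..b, (T - t + h)⁻¹) +
      C * (b - a) * ∫ t in a..b, (T - a + h) / (T - t + h) := by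
  have hinv := intervalIntegrable_inv_weight hab hw
  have hratio : IntervalIntegrable (fun t => (T - a + h) / (T - t + h)) volume a b :=
    hinv.const_mul (T - a + h)
  rw [← intervalIntegral.integral_const_mul, ← intervalIntegral.integral_const_mul,
    ← intervalIntegral.integral_add (hinv.const_mul _) (hratio.const_mul _)]
  refine integral_mono_on hab (intervalIntegrable_of_hasDerivAt hab hderiv)
    ((hinv.const_mul _).add (hratio.const_mul _)) fun t ht => ?_
  have hwt := hw t ht
  have hmono := mul_weight_le_of_deriv_le ht.1 hC (fun s hs => hw s ⟨hs.1, hs.2.trans ht.2⟩)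
    (fun s hs => hderiv s ⟨hs.1, hs.2.trans ht.2⟩) (fun s hs => hN s ⟨hs.1, hs.2.trans ht.2⟩)
  calc N t = N t * (T - t + h) / (T - t + h) := by field_simp
    _ ≤ (N a * (T - a + h) + C * (b - a) * (T - a + h)) / (T - t + h) := by
        gcongr
        linarith [mul_nonneg (mul_nonneg hC (sub_nonneg.2 ht.2)) (hw a ⟨le_rfl, hab⟩).le]
    _ = _ := by field_simp

theorem mul_weight_mul_integral_inv_le_of_deriv_le {N' : ℝ → ℝ} (hab : a ≤ b) (hC : 0 ≤ C)
    (hw : ∀ t ∈ Icc a b, 0 < T - t + h) (hderiv : ∀ t ∈ Icc a b, HasDerivAt N (N' t) t)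
    (hN : ∀ t ∈ Icc a b, N' t ≤ N t / (T - t + h) + C) :
    N b * (T - b + h) * (∫ t in a..b, (T - t + h)⁻¹) ≤
      (∫ t in a..b, N t) + C * (b - a) ^ 2 := by
  have hNint := intervalIntegrable_of_hasDerivAt hab hderiv
  have hbound :
      ∫ t in a..b, N b * (T - b + h) * (T - t + h)⁻¹ ≤ ∫ t in a..b, (N t + C * (b - a)) := by
    refine integral_mono_on hab ((intervalIntegrable_inv_weight hab hw).const_mul _)
      (hNint.add intervalIntegrable_const) fun t ht => ?_
    have hwt := hw t ht
    have hmono := mul_weight_le_of_deriv_le ht.2 hC (fun s hs => hw s ⟨ht.1.trans hs.1, hs.2⟩)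
      (fun s hs => hderiv s ⟨ht.1.trans hs.1, hs.2⟩) (fun s hs => hN s ⟨ht.1.trans hs.1, hs.2⟩)
    rw [← div_eq_mul_inv, div_le_iff₀ hwt]
    linarith [mul_nonneg (mul_nonneg hC (sub_nonneg.2 ht.1)) hwt.le]
  rw [intervalIntegral.integral_const_mul,
    intervalIntegral.integral_add hNint intervalIntegrable_const, intervalIntegral.integral_const,
    smul_eq_mul] at hbound
  linarith

end Weight

theorem rpow_one_add_le_of_log_le {x y z D K : ℝ} (hx : 0 < x) (hy : 0 < y) (hz : 0 < z)
    (h : (1 + D) * log x ≤ log z + D * log y + K) : x ^ (1 + D) ≤ z * y ^ D * exp K := by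
  rw [rpow_def_of_pos hx, rpow_def_of_pos hy, ← exp_log hz, ← exp_add, ← exp_add, exp_le_exp]
  linarith

theorem stmt_2_general (h S T : ℝ) (hh : 0 < h)
    (g g' N N' : ℝ → ℝ) (Ctilde Cbar : ℝ)
    (hCb : 0 < Cbar)
    (hgderiv : ∀ t ∈ Icc S T, HasDerivAt g (g' t) t)
    (hNderiv : ∀ t ∈ Icc S T, HasDerivAt N (N' t) t)
    (hgpos : ∀ t ∈ Icc S T, 0 < g t)
    (hg : ∀ t ∈ Icc S T, |g' t / 2 + N t * g t| ≤ Ctilde * g t)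
    (hN : ∀ t ∈ Icc S T, N' t ≤ N t / (T - t + h) + Cbar)
    (t₁ t₂ t₃ : ℝ) (h1 : S ≤ t₁) (h12 : t₁ < t₂) (h23 : t₂ < t₃) (h3 : t₃ ≤ T) :
    g t₂ ^ (1 + (∫ t in t₂..t₃, (T - t + h)⁻¹) / (∫ t in t₁..t₂, (T - t + h)⁻¹)) ≤
      g t₃ * g t₁ ^ ((∫ t in t₂..t₃, (T - t + h)⁻¹) / (∫ t in t₁..t₂, (T - t + h)⁻¹)) *
        Real.exp
          (2 * ((∫ t in t₂..t₃, (T - t + h)⁻¹) / (∫ t in t₁..t₂, (T - t + h)⁻¹)) * (t₂ - t₁) *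
              (Ctilde + Cbar * (t₂ - t₁)) +
            2 * (t₃ - t₂) * (Ctilde + Cbar * ∫ t in t₂..t₃, (T - t₂ + h) / (T - t + h))) := by
  have hsub₁₂ : Icc t₁ t₂ ⊆ Icc S T := Icc_subset_Icc h1 (h23.le.trans h3)
  have hsub₂₃ : Icc t₂ t₃ ⊆ Icc S T := Icc_subset_Icc (h1.trans h12.le) h3
  have hw : ∀ t ∈ Icc S T, 0 < T - t + h := fun t ht => by linarith [ht.2]
  have hlog₁₂ := abs_le.mp <| abs_log_sub_log_add_two_integral_le h12.le
    (fun t ht => hgderiv t (hsub₁₂ ht)) (fun t ht => hgpos t (hsub₁₂ ht))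
    (intervalIntegrable_of_hasDerivAt h12.le fun t ht => hNderiv t (hsub₁₂ ht))
    (fun t ht => hg t (hsub₁₂ ht))
  have hlog₂₃ := abs_le.mp <| abs_log_sub_log_add_two_integral_le h23.le
    (fun t ht => hgderiv t (hsub₂₃ ht)) (fun t ht => hgpos t (hsub₂₃ ht))
    (intervalIntegrable_of_hasDerivAt h23.le fun t ht => hNderiv t (hsub₂₃ ht))
    (fun t ht => hg t (hsub₂₃ ht))
  have hN₁₂ := mul_weight_mul_integral_inv_le_of_deriv_le h12.le hCb.le
    (fun t ht => hw t (hsub₁₂ ht)) (fun t ht => hNderiv t (hsub₁₂ ht))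
    (fun t ht => hN t (hsub₁₂ ht))
  have hN₂₃ := integral_le_of_deriv_le_div_weight_add h23.le hCb.le
    (fun t ht => hw t (hsub₂₃ ht)) (fun t ht => hNderiv t (hsub₂₃ ht))
    (fun t ht => hN t (hsub₂₃ ht))
  set I₁ := ∫ t in t₁..t₂, (T - t + h)⁻¹
  set I₂ := ∫ t in t₂..t₃, (T - t + h)⁻¹
  have hI₁ : 0 < I₁ := intervalIntegral_pos_of_pos_on
    (intervalIntegrable_inv_weight h12.le fun t ht => hw t (hsub₁₂ ht))
    (fun t ht => inv_pos.2 (hw t (hsub₁₂ (Ioo_subset_Icc_self ht)))) h12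
  have hI₂ : 0 < I₂ := intervalIntegral_pos_of_pos_on
    (intervalIntegrable_inv_weight h23.le fun t ht => hw t (hsub₂₃ ht))
    (fun t ht => inv_pos.2 (hw t (hsub₂₃ (Ioo_subset_Icc_self ht)))) h23
  have hD : I₂ / I₁ * I₁ = I₂ := div_mul_cancel₀ _ hI₁.ne'
  have hfirst : log (g t₂) - log (g t₁) + 2 * (N t₂ * (T - t₂ + h) * I₁) ≤
      2 * (t₂ - t₁) * (Ctilde + Cbar * (t₂ - t₁)) := by
    linarith
  refine rpow_one_add_le_of_log_le (hgpos t₂ (hsub₁₂ ⟨h12.le, le_rfl⟩))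
    (hgpos t₁ (hsub₁₂ ⟨le_rfl, h12.le⟩)) (hgpos t₃ (hsub₂₃ ⟨h23.le, le_rfl⟩)) ?_
  linear_combination mul_le_mul_of_nonneg_left hfirst (div_pos hI₂ hI₁).le + hlog₂₃.1 + 2 * hN₂₃ -
    2 * N t₂ * (T - t₂ + h) * hD

theorem stmt_2 (h S T : ℝ) (hh : 0 < h) (hS : 0 < S) (hST : S < T)
    (g g' N N' : ℝ → ℝ) (Ctilde Cbar : ℝ)
    (hCt : 0 < Ctilde) (hCb : 0 < Cbar)
    (hgderiv : ∀ t ∈ Icc S T, HasDerivAt g (g' t) t)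
    (hNderiv : ∀ t ∈ Icc S T, HasDerivAt N (N' t) t)
    (hg'cont : ContinuousOn g' (Icc S T)) (hN'cont : ContinuousOn N' (Icc S T))
    (hgpos : ∀ t ∈ Icc S T, 0 < g t) (hNpos : ∀ t ∈ Icc S T, 0 < N t)
    (hg : ∀ t ∈ Icc S T, |g' t / 2 + N t * g t| ≤ Ctilde * g t)
    (hN : ∀ t ∈ Icc S T, N' t ≤ N t / (T - t + h) + Cbar)
    (t₁ t₂ t₃ : ℝ) (h1 : S ≤ t₁) (h12 : t₁ < t₂) (h23 : t₂ < t₃) (h3 : t₃ ≤ T) :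
    g t₂ ^ (1 + (∫ t in t₂..t₃, (T - t + h)⁻¹) / (∫ t in t₁..t₂, (T - t + h)⁻¹)) ≤
      g t₃ * g t₁ ^ ((∫ t in t₂..t₃, (T - t + h)⁻¹) / (∫ t in t₁..t₂, (T - t + h)⁻¹)) *
        Real.exp
          (2 * ((∫ t in t₂..t₃, (T - t + h)⁻¹) / (∫ t in t₁..t₂, (T - t + h)⁻¹)) * (t₂ - t₁) *
              (Ctilde + Cbar * (t₂ - t₁)) +
            2 * (t₃ - t₂) * (Ctilde + Cbar * ∫ t in t₂..t₃, (T - t₂ + h) / (T - t + h))) :=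
  stmt_2_general h S T hh g g' N N' Ctilde Cbar hCb hgderiv hNderiv hgpos hg hN t₁ t₂ t₃ h1 h12 h23
    h3
end

section
/- Let n ≥ 1, and suppose g ∈ C¹((0,T]) is nonnegative and satisfies g'(t) + A·g(t)^{1+2/n} ≤ B·g(t) on (0,T] for positive constants A, B. Then g(t) ≤ (n/(2At))^{n/2}·e^{Bt} for t ∈ (0,T]. -/
open Real Set

theorem stmt_15 (n : ℕ) (hn : 1 ≤ n) (T A B : ℝ) (hT : 0 < T) (hA : 0 < A) (hB : 0 < B)
    (g g' : ℝ → ℝ)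
    (hderiv : ∀ t ∈ Ioc (0:ℝ) T, HasDerivAt g (g' t) t)
    (hcont : ContinuousOn g' (Ioc 0 T))
    (hpos : ∀ t ∈ Ioc (0:ℝ) T, 0 ≤ g t)
    (hineq : ∀ t ∈ Ioc (0:ℝ) T, g' t + A * g t ^ (1 + 2 / (n:ℝ)) ≤ B * g t) :
    ∀ t ∈ Ioc (0:ℝ) T, g t ≤ ((n:ℝ) / (2 * A * t)) ^ ((n:ℝ) / 2) * Real.exp (B * t) := by
  have hn0 : (0:ℝ) < n := by exact_mod_cast Nat.lt_of_lt_of_le Nat.zero_lt_one hn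
  set α : ℝ := 2 / (n:ℝ) with hαdef
  have hαpos : 0 < α := by positivity
  set h : ℝ → ℝ := fun τ => Real.exp (-B * τ) * g τ with hhdef
  set h' : ℝ → ℝ := fun τ => Real.exp (-B * τ) * (-B) * g τ + Real.exp (-B * τ) * g' τ
    with hh'def
  have hhderiv : ∀ τ ∈ Ioc (0:ℝ) T, HasDerivAt h (h' τ) τ := by
    intro τ hτ
    have h0 : HasDerivAt (fun x : ℝ => -B * x) (-B) τ := by
      have := (hasDerivAt_id τ).const_mul (-B)
      rwa [mul_one] at this
    exact (h0.exp).mul (hderiv τ hτ)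
  have hh'le : ∀ τ ∈ Ioc (0:ℝ) T,
      h' τ ≤ -A * Real.exp (-B * τ) * g τ ^ (1 + α) := by
    intro τ hτ
    have h2 := hineq τ hτ
    have h3 : (0:ℝ) < Real.exp (-B * τ) := Real.exp_pos _
    simp only [hh'def]
    nlinarith [mul_le_mul_of_nonneg_left (show g' τ ≤ B * g τ - A * g τ ^ (1 + α) by linarith)
      h3.le]
  have hh'nonpos : ∀ τ ∈ Ioc (0:ℝ) T, h' τ ≤ 0 := by
    intro τ hτ
    have := hh'le τ hτ
    have h3 : (0:ℝ) ≤ Real.exp (-B * τ) := (Real.exp_pos _).le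
    have h4 : (0:ℝ) ≤ g τ ^ (1 + α) := Real.rpow_nonneg (hpos τ hτ) _
    nlinarith [mul_nonneg (mul_nonneg hA.le h3) h4]
  -- h is antitone
  have hanti : ∀ s ∈ Ioc (0:ℝ) T, ∀ u ∈ Ioc (0:ℝ) T, s ≤ u → h u ≤ h s := by
    intro s hs u hu hsu
    have hsub : Icc s u ⊆ Ioc (0:ℝ) T := fun x hx =>
      ⟨lt_of_lt_of_le hs.1 hx.1, le_trans hx.2 hu.2⟩
    have hA' : AntitoneOn h (Icc s u) := by
      apply antitoneOn_of_deriv_nonpos (convex_Icc s u)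
      · intro x hx
        exact ((hhderiv x (hsub hx)).continuousAt).continuousWithinAt
      · intro x hx
        rw [interior_Icc] at hx
        exact ((hhderiv x (hsub (Ioo_subset_Icc_self hx))).differentiableAt).differentiableWithinAt
      · intro x hx
        rw [interior_Icc] at hx
        rw [(hhderiv x (hsub (Ioo_subset_Icc_self hx))).deriv]
        exact hh'nonpos x (hsub (Ioo_subset_Icc_self hx))
    exact hA' ⟨le_rfl, hsu⟩ ⟨hsu, le_rfl⟩ hsu
  intro t ht
  by_cases hgt : g t ≤ 0
  · have hg0 : g t = 0 := le_antisymm hgt (hpos t ht)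
    rw [hg0]
    have hb : (0:ℝ) ≤ (n:ℝ) / (2 * A * t) := by
      apply div_nonneg hn0.le
      nlinarith [ht.1]
    exact mul_nonneg (Real.rpow_nonneg hb _) (Real.exp_pos _).le
  push_neg at hgt
  -- positivity of g on (0, t]
  have hgpos : ∀ s ∈ Ioc (0:ℝ) t, 0 < g s := by
    intro s hs
    have hs' : s ∈ Ioc (0:ℝ) T := ⟨hs.1, hs.2.trans ht.2⟩
    have h5 := hanti s hs' t ht hs.2
    have h6 : 0 < h t := mul_pos (Real.exp_pos _) hgt
    have h7 : 0 < Real.exp (-B * s) := Real.exp_pos _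
    simp only [hhdef] at h5 h6
    nlinarith
  have hhpos : ∀ s ∈ Ioc (0:ℝ) t, 0 < h s := fun s hs =>
    mul_pos (Real.exp_pos _) (hgpos s hs)
  -- φ τ = h τ ^ (-α) - α*A*τ is monotone on (0, t]
  set φ : ℝ → ℝ := fun τ => h τ ^ (-α) - α * A * τ with hφdef
  have hφderiv : ∀ τ ∈ Ioc (0:ℝ) t,
      HasDerivAt φ (h' τ * (-α) * h τ ^ (-α - 1) - α * A) τ := by
    intro τ hτ
    have hτ' : τ ∈ Ioc (0:ℝ) T := ⟨hτ.1, hτ.2.trans ht.2⟩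
    have h1 := (hhderiv τ hτ').rpow_const (p := -α) (Or.inl (ne_of_gt (hhpos τ hτ)))
    have hlin : HasDerivAt (fun x : ℝ => α * A * x) (α * A) τ := by
      have := (hasDerivAt_id τ).const_mul (α * A)
      rwa [mul_one] at this
    exact h1.sub hlin
  have hφ'nonneg : ∀ τ ∈ Ioc (0:ℝ) t,
      0 ≤ h' τ * (-α) * h τ ^ (-α - 1) - α * A := by
    intro τ hτ
    have hτ' : τ ∈ Ioc (0:ℝ) T := ⟨hτ.1, hτ.2.trans ht.2⟩
    have hgτ : 0 < g τ := hgpos τ hτ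
    have hhτ : 0 < h τ := hhpos τ hτ
    have hkey : 1 ≤ Real.exp (-B * τ) * g τ ^ (1 + α) * h τ ^ (-α - 1) := by
      have e1 : h τ ^ (-α - 1) = Real.exp (-B * τ * (-α - 1)) * g τ ^ (-α - 1) := by
        simp only [hhdef]
        rw [Real.mul_rpow (Real.exp_pos _).le hgτ.le, ← Real.exp_mul]
      have e2 : g τ ^ (1 + α) * g τ ^ (-α - 1) = 1 := by
        rw [← Real.rpow_add hgτ]
        have : (1:ℝ) + α + (-α - 1) = 0 := by ring
        rw [this, Real.rpow_zero]
      rw [e1]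
      have e3 : Real.exp (-B * τ) * g τ ^ (1 + α) *
          (Real.exp (-B * τ * (-α - 1)) * g τ ^ (-α - 1)) =
          Real.exp (-B * τ + -B * τ * (-α - 1)) *
          (g τ ^ (1 + α) * g τ ^ (-α - 1)) := by
        rw [Real.exp_add]; ring
      rw [e3, e2, mul_one]
      have : (0:ℝ) ≤ -B * τ + -B * τ * (-α - 1) := by
        have he : -B * τ + -B * τ * (-α - 1) = B * τ * α := by ring
        rw [he]
        exact mul_nonneg (mul_nonneg hB.le hτ.1.le) hαpos.le
      calc (1:ℝ) = Real.exp 0 := Real.exp_zero.symm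
        _ ≤ _ := Real.exp_le_exp.mpr this
    have hle := hh'le τ hτ'
    have hc : (0:ℝ) ≤ α * h τ ^ (-α - 1) :=
      mul_nonneg hαpos.le (Real.rpow_nonneg hhτ.le _)
    -- h' τ * (-α) * h τ ^ (-α-1) ≥ A * α * (exp(-Bτ) * g^(1+α) * h^(-α-1)) ≥ A*α
    have step1 : A * Real.exp (-B * τ) * g τ ^ (1 + α) * (α * h τ ^ (-α - 1)) ≤
        -h' τ * (α * h τ ^ (-α - 1)) := by
      apply mul_le_mul_of_nonneg_right _ hc
      linarith
    have step2 : α * A ≤ A * Real.exp (-B * τ) * g τ ^ (1 + α) * (α * h τ ^ (-α - 1)) := by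
      have := mul_le_mul_of_nonneg_left hkey (mul_pos hαpos hA).le
      calc α * A = α * A * 1 := by ring
        _ ≤ α * A * (Real.exp (-B * τ) * g τ ^ (1 + α) * h τ ^ (-α - 1)) := this
        _ = A * Real.exp (-B * τ) * g τ ^ (1 + α) * (α * h τ ^ (-α - 1)) := by ring
    nlinarith
  -- φ monotone on [s, t] for s ∈ (0,t]
  have hmono : ∀ s ∈ Ioc (0:ℝ) t, φ s ≤ φ t := by
    intro s hs
    have hsub : Icc s t ⊆ Ioc (0:ℝ) t := fun x hx => ⟨lt_of_lt_of_le hs.1 hx.1, hx.2⟩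
    have hM : MonotoneOn φ (Icc s t) := by
      apply monotoneOn_of_deriv_nonneg (convex_Icc s t)
      · intro x hx
        exact ((hφderiv x (hsub hx)).continuousAt).continuousWithinAt
      · intro x hx
        rw [interior_Icc] at hx
        exact ((hφderiv x (hsub (Ioo_subset_Icc_self hx))).differentiableAt).differentiableWithinAt
      · intro x hx
        rw [interior_Icc] at hx
        rw [(hφderiv x (hsub (Ioo_subset_Icc_self hx))).deriv]
        exact hφ'nonneg x (hsub (Ioo_subset_Icc_self hx))
    exact hM ⟨le_rfl, hs.2⟩ ⟨hs.2, le_rfl⟩ hs.2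
  -- deduce α*A*(t-s) ≤ h t ^ (-α)
  have hbound : ∀ s ∈ Ioc (0:ℝ) t, α * A * (t - s) ≤ h t ^ (-α) := by
    intro s hs
    have h8 := hmono s hs
    have h9 : 0 < h s ^ (-α) := Real.rpow_pos_of_pos (hhpos s hs) _
    simp only [hφdef] at h8
    linarith
  -- take limit s → 0⁺
  have hlimit : α * A * t ≤ h t ^ (-α) := by
    have hlim : Filter.Tendsto (fun s : ℝ => α * A * (t - s)) (nhdsWithin 0 (Ioi 0))
        (nhds (α * A * t)) := by
      have hc : Continuous (fun s : ℝ => α * A * (t - s)) :=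
        continuous_const.mul (continuous_const.sub continuous_id)
      have := (hc.tendsto 0).mono_left (nhdsWithin_le_nhds (s := Ioi (0:ℝ)))
      simpa using this
    refine le_of_tendsto hlim ?_
    filter_upwards [Ioc_mem_nhdsGT ht.1] with s hs
    exact hbound s hs
  -- unravel
  have hht : 0 < h t := hhpos t ⟨ht.1, le_rfl⟩
  have hαAt : 0 < α * A * t := mul_pos (mul_pos hαpos hA) ht.1
  -- h t ≤ (α*A*t) ^ (-(1/α))
  have h10 : h t ≤ (α * A * t) ^ (-(1/α)) := by
    have h11 : (h t ^ (-α)) ^ (-(1/α)) ≤ (α * A * t) ^ (-(1/α)) :=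
      Real.rpow_le_rpow_of_nonpos hαAt hlimit (neg_nonpos.mpr (by positivity))
    have h12 : (h t ^ (-α)) ^ (-(1/α)) = h t := by
      rw [← Real.rpow_mul hht.le]
      have hne : α ≠ 0 := ne_of_gt hαpos
      have : -α * -(1/α) = 1 := by field_simp
      rw [this, Real.rpow_one]
    rwa [h12] at h11
  have h13 : (α * A * t) ^ (-(1/α)) = ((n:ℝ) / (2 * A * t)) ^ ((n:ℝ) / 2) := by
    rw [Real.rpow_neg hαAt.le, ← Real.inv_rpow hαAt.le]
    have hne : (n:ℝ) ≠ 0 := ne_of_gt hn0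
    have htne : t ≠ 0 := ne_of_gt ht.1
    congr 1
    · rw [hαdef]; field_simp
    · rw [hαdef]; field_simp
  rw [h13] at h10
  -- conclude
  have hgt' : g t = Real.exp (B * t) * h t := by
    simp only [hhdef]
    rw [← mul_assoc, ← Real.exp_add]
    norm_num
  rw [hgt']
  calc Real.exp (B * t) * h t ≤ Real.exp (B * t) * (((n:ℝ) / (2 * A * t)) ^ ((n:ℝ) / 2)) :=
        mul_le_mul_of_nonneg_left h10 (Real.exp_pos _).le
    _ = ((n:ℝ) / (2 * A * t)) ^ ((n:ℝ) / 2) * Real.exp (B * t) := by ring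
end
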